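/- arXiv:1509.03888 — 5 statements merged into one kernel-verified Lean document; each statement's English description precedes it below -/
import Mathlib

section
/- Let n be a positive integer, let M be a symmetric positive definite n×n real matrix, let a < b be real numbers, and let w : [a,b] → ℝⁿ be a continuous function. Then (∫_a^b w(s) ds)ᵀ M (∫_a^b w(s) ds) ≤ (b − a) · ∫_a^b w(s)ᵀ M w(s) ds. -/
/-!
The quadratic form `u ↦ uᵀ M u` of a positive semidefinite matrix is convex, so Jensen's
inequality for the normalized Lebesgue measure on `[a, b]` bounds it at the mean value of `w`
by the mean of its values along `w`; multiplying by `(b - a)²` and using that the form is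
homogeneous of degree two gives the claim.
-/

open Matrix MeasureTheory Set

namespace Matrix.PosSemidef

variable {n : Type*} [Fintype n] {M : Matrix n n ℝ}

theorem convexOn_dotProduct_mulVec (hM : M.PosSemidef) :
    ConvexOn ℝ univ fun u : n → ℝ => u ⬝ᵥ (M *ᵥ u) := by
  refine ⟨convex_univ, fun x _ y _ a b _ _ hab => ?_⟩
  -- the convexity gap equals `a * b` times the quadratic form at `x - y`
  have hgap := hM.dotProduct_mulVec_nonneg (x - y)
  simp only [star_trivial, smul_eq_mul, mulVec_add, mulVec_smul, mulVec_sub, dotProduct_add,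
    add_dotProduct, dotProduct_sub, sub_dotProduct, dotProduct_smul, smul_dotProduct] at hgap ⊢
  obtain rfl : b = 1 - a := by linarith
  nlinarith [mul_nonneg ‹0 ≤ a› ‹0 ≤ 1 - a›]

variable {α : Type*} [MeasurableSpace α] {μ : Measure α} [IsFiniteMeasure μ]

theorem integral_dotProduct_mulVec_le (hM : M.PosSemidef) {f : α → n → ℝ}
    (hf : Integrable f μ) (hQf : Integrable (fun x => f x ⬝ᵥ (M *ᵥ f x)) μ) :
    (∫ x, f x ∂μ) ⬝ᵥ (M *ᵥ ∫ x, f x ∂μ) ≤ μ.real univ * ∫ x, f x ⬝ᵥ (M *ᵥ f x) ∂μ := by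
  rcases eq_zero_or_neZero μ with rfl | hμ
  · simp
  have hJensen := hM.convexOn_dotProduct_mulVec.map_average_le
    (by fun_prop) isClosed_univ (by simp) hf hQf
  have hm : 0 < μ.real univ := measureReal_univ_pos
  simp only [average_eq, mulVec_smul, dotProduct_smul, smul_dotProduct, smul_eq_mul] at hJensen
  field_simp at hJensen
  exact hJensen

end Matrix.PosSemidef

theorem jensen_integral_quadratic_form_general
    (n : ℕ) (M : Matrix (Fin n) (Fin n) ℝ)
    (hMpd : M.PosDef)
    (a b : ℝ) (hab : a < b)
    (w : ℝ → (Fin n → ℝ)) (hw : ContinuousOn w (Set.Icc a b)) :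
    (∫ s in a..b, w s) ⬝ᵥ (M *ᵥ (∫ s in a..b, w s)) ≤
      (b - a) * ∫ s in a..b, (w s) ⬝ᵥ (M *ᵥ w s) := by
  have hQw : ContinuousOn (fun s => w s ⬝ᵥ (M *ᵥ w s)) (Icc a b) := by
    fun_prop
  simpa only [intervalIntegral.integral_of_le hab.le, measureReal_restrict_apply_univ,
    Real.volume_real_Ioc_of_le hab.le] using
    hMpd.posSemidef.integral_dotProduct_mulVec_le (μ := volume.restrict (Ioc a b))
      (hw.integrableOn_Icc.mono_set Ioc_subset_Icc_self)
      (hQw.integrableOn_Icc.mono_set Ioc_subset_Icc_self)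

/-- Jensen's inequality for vector-valued integrals with a symmetric positive
definite weight matrix `M`. -/
theorem jensen_integral_quadratic_form
    (n : ℕ) (hn : 0 < n) (M : Matrix (Fin n) (Fin n) ℝ)
    (hMsymm : M.IsSymm) (hMpd : M.PosDef)
    (a b : ℝ) (hab : a < b)
    (w : ℝ → (Fin n → ℝ)) (hw : ContinuousOn w (Set.Icc a b)) :
    (∫ s in a..b, w s) ⬝ᵥ (M *ᵥ (∫ s in a..b, w s)) ≤
      (b - a) * ∫ s in a..b, (w s) ⬝ᵥ (M *ᵥ w s) :=
  jensen_integral_quadratic_form_general n M hMpd a b hab w hw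
end

section
/- Let n be a positive integer, let M be a symmetric positive definite n×n real matrix, let a < b be real numbers, and let w : [a,b] → ℝⁿ be a continuous function. Then (∫_a^b ∫_θ^b w(s) ds dθ)ᵀ M (∫_a^b ∫_θ^b w(s) ds dθ) ≤ ((b − a)²/2) · ∫_a^b ∫_θ^b w(s)ᵀ M w(s) ds dθ. -/
/-! Swapping the order of integration turns both iterated integrals into integrals against the
weight `s - a`, of total mass `(b - a) ^ 2 / 2`. Writing `M = Bᵀ B`, the quadratic form becomes the
squared Euclidean norm `‖B x‖ ^ 2`, and the claim is the weighted Cauchy–Schwarz inequality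
`‖∫ ρ f‖ ^ 2 ≤ (∫ ρ) (∫ ρ ‖f‖ ^ 2)`: combine `‖∫ ρ f‖ ≤ ∫ ρ ‖f‖` with the nonpositive discriminant
of the nonnegative quadratic `x ↦ ∫ ρ (x - ‖f‖) ^ 2`. -/

open Matrix Set MeasureTheory intervalIntegral

theorem sq_intervalIntegral_mul_le {a b : ℝ} {ρ h : ℝ → ℝ} (hab : a ≤ b)
    (hρ : ContinuousOn ρ (Icc a b)) (hρ₀ : ∀ s ∈ Icc a b, 0 ≤ ρ s)
    (hh : ContinuousOn h (Icc a b)) :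
    (∫ s in a..b, ρ s * h s) ^ 2 ≤ (∫ s in a..b, ρ s) * ∫ s in a..b, ρ s * h s ^ 2 := by
  rw [← uIcc_of_le hab] at hρ hh
  have hρi : IntervalIntegrable ρ volume a b := hρ.intervalIntegrable
  have hρh : IntervalIntegrable (fun s => ρ s * h s) volume a b :=
    (hρ.mul hh).intervalIntegrable
  have hρh2 : IntervalIntegrable (fun s => ρ s * h s ^ 2) volume a b :=
    (hρ.mul (hh.pow 2)).intervalIntegrable
  have hquad : ∀ x : ℝ, 0 ≤ (∫ s in a..b, ρ s) * (x * x) + (-2 * ∫ s in a..b, ρ s * h s) * x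
      + ∫ s in a..b, ρ s * h s ^ 2 := by
    intro x
    have hexpand : ∫ s in a..b, ρ s * (x - h s) ^ 2 = (∫ s in a..b, ρ s) * (x * x)
        + (-2 * ∫ s in a..b, ρ s * h s) * x + ∫ s in a..b, ρ s * h s ^ 2 := by
      simp_rw [show ∀ s, ρ s * (x - h s) ^ 2
          = ρ s * (x * x) + -2 * x * (ρ s * h s) + ρ s * h s ^ 2 from fun s => by ring]
      rw [integral_add ((hρi.mul_const _).add (hρh.const_mul _)) hρh2,
        integral_add (hρi.mul_const _) (hρh.const_mul _), intervalIntegral.integral_mul_const,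
        intervalIntegral.integral_const_mul]
      ring
    rw [← hexpand]
    exact integral_nonneg hab fun s hs => mul_nonneg (hρ₀ s hs) (sq_nonneg _)
  have hdiscrim := discrim_le_zero hquad
  rw [discrim] at hdiscrim
  linarith

theorem sq_norm_intervalIntegral_smul_le {E : Type*} [NormedAddCommGroup E] [NormedSpace ℝ E]
    {a b : ℝ} {ρ : ℝ → ℝ} {f : ℝ → E} (hab : a ≤ b)
    (hρ : ContinuousOn ρ (Icc a b)) (hρ₀ : ∀ s ∈ Icc a b, 0 ≤ ρ s)
    (hf : ContinuousOn f (Icc a b)) :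
    ‖∫ s in a..b, ρ s • f s‖ ^ 2 ≤ (∫ s in a..b, ρ s) * ∫ s in a..b, ρ s * ‖f s‖ ^ 2 := by
  have hnorm : ‖∫ s in a..b, ρ s • f s‖ ≤ ∫ s in a..b, ρ s * ‖f s‖ := by
    refine (intervalIntegral.norm_integral_le_integral_norm hab).trans_eq
      (integral_congr fun s hs => ?_)
    rw [uIcc_of_le hab] at hs
    rw [norm_smul, Real.norm_of_nonneg (hρ₀ s hs)]
  calc ‖∫ s in a..b, ρ s • f s‖ ^ 2 ≤ (∫ s in a..b, ρ s * ‖f s‖) ^ 2 :=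
        pow_le_pow_left₀ (norm_nonneg _) hnorm 2
    _ ≤ _ := sq_intervalIntegral_mul_le hab hρ hρ₀ hf.norm

section IteratedIntegral

variable {E : Type*} [NormedAddCommGroup E] [NormedSpace ℝ E] [CompleteSpace E]

theorem integral_integral_eq_integral_sub_smul {f : ℝ → E} (hf : Continuous f) (a b : ℝ) :
    ∫ θ in a..b, ∫ s in θ..b, f s = ∫ s in a..b, (s - a) • f s := by
  set F : ℝ → E := fun t => ∫ s in a..t, f s
  have hF : ∀ t, HasDerivAt F (f t) t := fun t => (hf.integral_hasStrictDerivAt a t).hasDerivAt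
  have hparts := integral_smul_deriv_eq_deriv_smul (u := fun s => s - a) (u' := fun _ => 1)
    (fun s _ => (hasDerivAt_id s).sub_const a) (fun s _ => hF s) intervalIntegrable_const
    (hf.intervalIntegrable a b)
  have hinner : ∀ θ, ∫ s in θ..b, f s = F b - F θ := fun θ =>
    (integral_interval_sub_left (hf.intervalIntegrable a b) (hf.intervalIntegrable a θ)).symm
  simp_rw [hinner, hparts]
  rw [intervalIntegral.integral_sub intervalIntegrable_const
    ((continuous_primitive (fun x y => hf.intervalIntegrable x y) a).intervalIntegrable a b)]
  simp only [intervalIntegral.integral_const, sub_self, integral_same, smul_zero, sub_zero,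
    one_smul, F]

theorem integral_integral_eq_integral_sub_smul_of_continuousOn {f : ℝ → E} {a b : ℝ}
    (hab : a ≤ b) (hf : ContinuousOn f (Icc a b)) :
    ∫ θ in a..b, ∫ s in θ..b, f s = ∫ s in a..b, (s - a) • f s := by
  set g := IccExtend hab fun x : Icc a b => f x
  have hfg : EqOn f g (Icc a b) := fun s hs =>
    (IccExtend_of_mem hab (fun x : Icc a b => f x) hs).symm
  calc ∫ θ in a..b, ∫ s in θ..b, f s = ∫ θ in a..b, ∫ s in θ..b, g s := by
        refine integral_congr fun θ hθ => integral_congr fun s hs => hfg ?_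
        rw [uIcc_of_le hab] at hθ
        rw [uIcc_of_le hθ.2] at hs
        exact ⟨hθ.1.trans hs.1, hs.2⟩
    _ = ∫ s in a..b, (s - a) • g s :=
        integral_integral_eq_integral_sub_smul
          (continuousOn_iff_continuous_domRestrict.1 hf).Icc_extend' a b
    _ = ∫ s in a..b, (s - a) • f s := by
        refine integral_congr fun s hs => ?_
        rw [uIcc_of_le hab] at hs
        rw [hfg hs]

end IteratedIntegral

theorem integral_sub_left_eq_sq_div_two (a b : ℝ) : ∫ s in a..b, (s - a) = (b - a) ^ 2 / 2 := by
  simp [integral_comp_sub_right fun x => x]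

open scoped MatrixOrder in
theorem Matrix.PosSemidef.exists_dotProduct_mulVec_eq_norm_sq {n : Type*} [Fintype n]
    {M : Matrix n n ℝ} (hM : M.PosSemidef) :
    ∃ T : (n → ℝ) →L[ℝ] EuclideanSpace ℝ n, ∀ x, x ⬝ᵥ (M *ᵥ x) = ‖T x‖ ^ 2 := by
  classical
  obtain ⟨B, rfl⟩ := CStarAlgebra.nonneg_iff_eq_star_mul_self.mp hM.nonneg
  refine ⟨(EuclideanSpace.equiv n ℝ).symm.toContinuousLinearMap.comp
    (Matrix.mulVecLin B).toContinuousLinearMap, fun x => ?_⟩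
  rw [← real_inner_self_eq_norm_sq]
  change _ = inner ℝ (WithLp.toLp 2 (B *ᵥ x)) (WithLp.toLp 2 (B *ᵥ x))
  rw [EuclideanSpace.inner_eq_star_dotProduct, ← mulVec_mulVec, dotProduct_mulVec,
    star_eq_conjTranspose, vecMul_conjTranspose]
  simp only [star_trivial]

theorem jensen_double_integral_quadratic_form_general
    (n : ℕ) (M : Matrix (Fin n) (Fin n) ℝ)
    (hMpd : M.PosDef)
    (a b : ℝ) (hab : a < b)
    (w : ℝ → (Fin n → ℝ)) (hw : ContinuousOn w (Set.Icc a b)) :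
    (∫ θ in a..b, ∫ s in θ..b, w s) ⬝ᵥ (M *ᵥ (∫ θ in a..b, ∫ s in θ..b, w s)) ≤
      ((b - a) ^ 2 / 2) * ∫ θ in a..b, ∫ s in θ..b, (w s) ⬝ᵥ (M *ᵥ w s) := by
  obtain ⟨T, hT⟩ := hMpd.posSemidef.exists_dotProduct_mulVec_eq_norm_sq
  have hTw : ContinuousOn (fun s => T (w s)) (Icc a b) := T.continuous.comp_continuousOn hw
  have hρ : ContinuousOn (fun s : ℝ => s - a) (Icc a b) := by fun_prop
  have hρ₀ : ∀ s ∈ Icc a b, 0 ≤ s - a := fun s hs => sub_nonneg.2 hs.1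
  have hqw : ContinuousOn (fun s => w s ⬝ᵥ (M *ᵥ w s)) (Icc a b) := by
    simp_rw [hT]
    exact hTw.norm.pow 2
  have hρw : IntervalIntegrable (fun s => (s - a) • w s) volume a b :=
    (hρ.smul hw).intervalIntegrable_of_Icc hab.le
  rw [integral_integral_eq_integral_sub_smul_of_continuousOn hab.le hw,
    integral_integral_eq_integral_sub_smul_of_continuousOn hab.le hqw, hT,
    ← T.intervalIntegral_comp_comm hρw]
  simp_rw [T.map_smul, hT, smul_eq_mul, ← integral_sub_left_eq_sq_div_two a b]
  exact sq_norm_intervalIntegral_smul_le hab.le hρ hρ₀ hTw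

/-- Jensen's inequality for iterated vector-valued integrals with a symmetric
positive definite weight matrix `M`. -/
theorem jensen_double_integral_quadratic_form
    (n : ℕ) (hn : 0 < n) (M : Matrix (Fin n) (Fin n) ℝ)
    (hMsymm : M.IsSymm) (hMpd : M.PosDef)
    (a b : ℝ) (hab : a < b)
    (w : ℝ → (Fin n → ℝ)) (hw : ContinuousOn w (Set.Icc a b)) :
    (∫ θ in a..b, ∫ s in θ..b, w s) ⬝ᵥ (M *ᵥ (∫ θ in a..b, ∫ s in θ..b, w s)) ≤
      ((b - a) ^ 2 / 2) * ∫ θ in a..b, ∫ s in θ..b, (w s) ⬝ᵥ (M *ᵥ w s) :=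
  jensen_double_integral_quadratic_form_general n M hMpd a b hab w hw
end

section
/- Two-term reciprocally convex combination inequality (matrix form): Let n be a positive integer, R a symmetric positive definite n×n real matrix, and G an n×n real matrix such that the 2n×2n block matrix [[R, G], [Gᵀ, R]] is positive semidefinite. Then for every α with 0 < α < 1 and all vectors u, v ∈ ℝⁿ: (1/α) · uᵀ R u + (1/(1−α)) · vᵀ R v ≥ uᵀ R u + vᵀ R v + uᵀ G v + vᵀ Gᵀ u. -/
open Matrix

/-
Positive semidefiniteness of `[[R, G], [Gᵀ, R]]` tested on `(t • u, -v)` gives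
`t (uᵀGv + vᵀGᵀu) ≤ t² uᵀRu + vᵀRv` for every real `t`. For `t > 0` this is
`uᵀGv + vᵀGᵀu ≤ t uᵀRu + t⁻¹ vᵀRv`, and with `t = (1 - α) / α` the right-hand side is exactly
`(1/α - 1) uᵀRu + (1/(1 - α) - 1) vᵀRv`.
-/

namespace Matrix.PosSemidef

variable {m n : Type*} [Fintype m] [Fintype n]
  {A : Matrix m m ℝ} {B : Matrix m n ℝ} {D : Matrix n n ℝ}

theorem fromBlocks_mul_cross_le (h : (fromBlocks A B Bᵀ D).PosSemidef)
    (u : m → ℝ) (v : n → ℝ) (t : ℝ) :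
    t * (u ⬝ᵥ (B *ᵥ v) + v ⬝ᵥ (Bᵀ *ᵥ u)) ≤ t ^ 2 * (u ⬝ᵥ (A *ᵥ u)) + v ⬝ᵥ (D *ᵥ v) := by
  have hq := h.dotProduct_mulVec_nonneg (Sum.elim (t • u) (-v))
  simp only [fromBlocks_mulVec, star_trivial, sumElim_dotProduct_sumElim, mulVec_smul,
    mulVec_neg, dotProduct_add, smul_dotProduct, dotProduct_smul, neg_dotProduct,
    dotProduct_neg, smul_eq_mul, Sum.elim_comp_inl, Sum.elim_comp_inr] at hq
  linarith

theorem fromBlocks_cross_le (h : (fromBlocks A B Bᵀ D).PosSemidef)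
    (u : m → ℝ) (v : n → ℝ) {t : ℝ} (ht : 0 < t) :
    u ⬝ᵥ (B *ᵥ v) + v ⬝ᵥ (Bᵀ *ᵥ u) ≤ t * (u ⬝ᵥ (A *ᵥ u)) + t⁻¹ * (v ⬝ᵥ (D *ᵥ v)) := by
  rw [← mul_le_mul_iff_right₀ ht]
  calc t * (u ⬝ᵥ (B *ᵥ v) + v ⬝ᵥ (Bᵀ *ᵥ u))
      ≤ t ^ 2 * (u ⬝ᵥ (A *ᵥ u)) + v ⬝ᵥ (D *ᵥ v) := h.fromBlocks_mul_cross_le u v t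
    _ = t * (t * (u ⬝ᵥ (A *ᵥ u)) + t⁻¹ * (v ⬝ᵥ (D *ᵥ v))) := by field_simp

end Matrix.PosSemidef

theorem reciprocally_convex_combination_matrix_general
    (n : ℕ)
    (R G : Matrix (Fin n) (Fin n) ℝ)
    (hblock : (Matrix.fromBlocks R G Gᵀ R).PosSemidef)
    (α : ℝ) (hα0 : 0 < α) (hα1 : α < 1) (u v : Fin n → ℝ) :
    (1 / α) * (u ⬝ᵥ (R *ᵥ u)) + (1 / (1 - α)) * (v ⬝ᵥ (R *ᵥ v)) ≥
      u ⬝ᵥ (R *ᵥ u) + v ⬝ᵥ (R *ᵥ v) + u ⬝ᵥ (G *ᵥ v) + v ⬝ᵥ (Gᵀ *ᵥ u) := by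
  have h1α : 0 < 1 - α := sub_pos.mpr hα1
  have hcross := hblock.fromBlocks_cross_le u v (div_pos h1α hα0)
  have hinv_α : 1 / α = 1 + (1 - α) / α := by field_simp; ring
  have hinv_one_sub_α : 1 / (1 - α) = 1 + ((1 - α) / α)⁻¹ := by field_simp; ring
  rw [ge_iff_le, hinv_α, hinv_one_sub_α]
  linarith

/-- Two-term reciprocally convex combination inequality (matrix form). -/
theorem reciprocally_convex_combination_matrix
    (n : ℕ) (hn : 0 < n)
    (R G : Matrix (Fin n) (Fin n) ℝ)
    (hRsymm : R.IsSymm) (hRpd : R.PosDef)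
    (hblock : (Matrix.fromBlocks R G Gᵀ R).PosSemidef)
    (α : ℝ) (hα0 : 0 < α) (hα1 : α < 1) (u v : Fin n → ℝ) :
    (1 / α) * (u ⬝ᵥ (R *ᵥ u)) + (1 / (1 - α)) * (v ⬝ᵥ (R *ᵥ v)) ≥
      u ⬝ᵥ (R *ᵥ u) + v ⬝ᵥ (R *ᵥ v) + u ⬝ᵥ (G *ᵥ v) + v ⬝ᵥ (Gᵀ *ᵥ u) :=
  reciprocally_convex_combination_matrix_general n R G hblock α hα0 hα1 u v
end

section
/- Weighted Dirichlet estimate on a box: Let l be a positive integer, L₁, …, L_l > 0, and Ω = {x ∈ ℝˡ : |x_k| ≤ L_k for all k}. Let u : ℝˡ → ℝ be continuously differentiable with u(x) = 0 for every x on the boundary of Ω (i.e., whenever |x_k| = L_k for some k), and let D₁, …, D_l > 0. Then Σ_{k=1}^{l} D_k · ∫_Ω (∂u/∂x_k)(x)² dx ≥ (π²/4) · (Σ_{k=1}^{l} D_k/L_k²) · ∫_Ω u(x)² dx. -/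
open MeasureTheory Real Set Filter

/-!
In one variable, if `ν L < π / 2` then `cos (ν t) > 0` on `[-L, L]`, and Picone's identity
`u'² - ν² u² = (u' + ν tan (ν t) u)² - (ν tan (ν t) u²)'` integrates, as `u (±L) = 0`, to
`ν² ∫ u² ≤ ∫ u'²`; letting `ν ↑ π / (2 L)` gives the sharp one-dimensional Poincaré inequality.
Applied on every line parallel to the `k`-th axis and integrated over the other coordinates
(Fubini), it gives `(π / (2 L_k))² ∫_Ω u² ≤ ∫_Ω (∂_k u)²`; multiply by `D_k` and sum over `k`.
-/

theorem hasDerivAt_mul_tan_mul_sq {u : ℝ → ℝ} {u' ν t : ℝ} (hu : HasDerivAt u u' t)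
    (hc : cos (ν * t) ≠ 0) :
    HasDerivAt (fun s => ν * tan (ν * s) * u s ^ 2)
      ((u' + ν * tan (ν * t) * u t) ^ 2 - (u' ^ 2 - ν ^ 2 * u t ^ 2)) t := by
  have htan : HasDerivAt (fun s => tan (ν * s)) (1 / cos (ν * t) ^ 2 * ν) t :=
    (hasDerivAt_tan hc).comp t (by simpa using (hasDerivAt_id t).const_mul ν)
  refine ((htan.const_mul ν).mul (hu.pow 2)).congr_deriv ?_
  rw [Pi.pow_apply, tan_eq_sin_div_cos]
  field_simp
  linear_combination -(ν ^ 2 * u t ^ 2) * sin_sq_add_cos_sq (ν * t)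

theorem sq_mul_integral_sq_le_integral_deriv_sq {u u' : ℝ → ℝ} {L ν : ℝ} (hL : 0 ≤ L)
    (hν : 0 ≤ ν) (hνL : ν * L < π / 2) (hu : ∀ t ∈ Icc (-L) L, HasDerivAt u (u' t) t)
    (hu' : ContinuousOn u' (Icc (-L) L)) (hleft : u (-L) = 0) (hright : u L = 0) :
    ν ^ 2 * ∫ t in -L..L, u t ^ 2 ≤ ∫ t in -L..L, u' t ^ 2 := by
  have hI : uIcc (-L) L = Icc (-L) L := uIcc_of_le (by linarith)
  have hcos : ∀ t ∈ Icc (-L) L, cos (ν * t) ≠ 0 := fun t ht =>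
    (cos_pos_of_mem_Ioo ⟨by nlinarith [ht.1], by nlinarith [ht.2]⟩).ne'
  have hu_cont : ContinuousOn u (Icc (-L) L) := fun t ht =>
    (hu t ht).continuousAt.continuousWithinAt
  set g : ℝ → ℝ := fun t => u' t + ν * tan (ν * t) * u t
  have hg_cont : ContinuousOn g (Icc (-L) L) :=
    hu'.add ((continuousOn_const.mul (continuousOn_tan.comp (continuousOn_const.mul continuousOn_id)
      hcos)).mul hu_cont)
  have h_int : ∀ {f : ℝ → ℝ}, ContinuousOn f (Icc (-L) L) → IntervalIntegrable f volume (-L) L :=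
    fun hf => (hI ▸ hf).intervalIntegrable
  have hu'_int : IntervalIntegrable (fun t => u' t ^ 2) volume (-L) L := h_int (hu'.pow 2)
  have hu_int : IntervalIntegrable (fun t => ν ^ 2 * u t ^ 2) volume (-L) L :=
    h_int (continuousOn_const.mul (hu_cont.pow 2))
  have hg_int : IntervalIntegrable (fun t => g t ^ 2) volume (-L) L := h_int (hg_cont.pow 2)
  have hboundary : ∫ t in -L..L, (g t ^ 2 - (u' t ^ 2 - ν ^ 2 * u t ^ 2)) = 0 := by
    rw [intervalIntegral.integral_eq_sub_of_hasDerivAt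
      (fun t ht => hasDerivAt_mul_tan_mul_sq (hu t (hI ▸ ht)) (hcos t (hI ▸ ht)))
      (hg_int.sub (hu'_int.sub hu_int))]
    simp [hleft, hright]
  have hsq : 0 ≤ ∫ t in -L..L, g t ^ 2 :=
    intervalIntegral.integral_nonneg (by linarith) fun t _ => sq_nonneg _
  rw [intervalIntegral.integral_sub hg_int (hu'_int.sub hu_int),
    intervalIntegral.integral_sub hu'_int hu_int, intervalIntegral.integral_const_mul] at hboundary
  linarith

theorem sq_pi_div_mul_setIntegral_sq_le_setIntegral_deriv_sq {u u' : ℝ → ℝ} {L : ℝ} (hL : 0 < L)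
    (hu : ∀ t ∈ Icc (-L) L, HasDerivAt u (u' t) t) (hu' : ContinuousOn u' (Icc (-L) L))
    (hleft : u (-L) = 0) (hright : u L = 0) :
    (π / (2 * L)) ^ 2 * ∫ t in Icc (-L) L, u t ^ 2 ≤ ∫ t in Icc (-L) L, u' t ^ 2 := by
  have hμ : 0 < π / (2 * L) := by positivity
  simp only [integral_Icc_eq_integral_Ioc, ← intervalIntegral.integral_of_le (neg_le_self hL.le)]
  refine le_of_tendsto (((continuous_pow 2).mul continuous_const).tendsto _ |>.mono_left
    nhdsWithin_le_nhds) (eventually_of_mem (Ioo_mem_nhdsLT hμ) fun ν hν => ?_)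
  refine sq_mul_integral_sq_le_integral_deriv_sq hL.le hν.1.le ?_ hu hu' hleft hright
  have := (lt_div_iff₀ (by positivity)).1 hν.2
  linarith

theorem setIntegral_Icc_eq_setIntegral_setIntegral_insertNth {n : ℕ} {E : Type*}
    [NormedAddCommGroup E] [NormedSpace ℝ E] {a b : Fin (n + 1) → ℝ}
    {f : (Fin (n + 1) → ℝ) → E} (hf : IntegrableOn f (Icc a b)) (k : Fin (n + 1)) :
    ∫ x in Icc a b, f x =
      ∫ y in Icc (fun j => a (k.succAbove j)) (fun j => b (k.succAbove j)),
        ∫ t in Icc (a k) (b k), f (k.insertNth t y) := by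
  set e : ℝ × (Fin n → ℝ) ≃ᵐ (Fin (n + 1) → ℝ) :=
    (MeasurableEquiv.piFinSuccAbove (fun _ => ℝ) k).symm
  have he : MeasurePreserving e :=
    (volume_preserving_piFinSuccAbove (fun _ : Fin (n + 1) => ℝ) k).symm _
  have hpre : e ⁻¹' Icc a b =
      Icc (a k) (b k) ×ˢ Icc (fun j => a (k.succAbove j)) (fun j => b (k.succAbove j)) :=
    ((Fin.insertNthOrderIso (fun _ => ℝ) k).preimage_Icc _ _).trans (Icc_prod_eq _ _)
  have hfe := (he.integrableOn_comp_preimage e.measurableEmbedding).2 hf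
  rw [hpre, IntegrableOn, Measure.volume_eq_prod, ← Measure.prod_restrict] at hfe
  rw [← he.map_eq, setIntegral_map_equiv, hpre, Measure.volume_eq_prod, ← Measure.prod_restrict,
    integral_prod_symm (fun z => f (e z)) hfe]
  rfl

theorem setIntegral_Icc_mono_of_insertNth {n : ℕ} {a b : Fin (n + 1) → ℝ}
    {f g : (Fin (n + 1) → ℝ) → ℝ} (hf : Continuous f) (hg : Continuous g) (k : Fin (n + 1))
    (hfg : ∀ y ∈ Icc (fun j => a (k.succAbove j)) (fun j => b (k.succAbove j)),
      ∫ t in Icc (a k) (b k), f (k.insertNth t y) ≤ ∫ t in Icc (a k) (b k), g (k.insertNth t y)) :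
    ∫ x in Icc a b, f x ≤ ∫ x in Icc a b, g x := by
  rw [← sub_nonneg, ← integral_sub hg.integrableOn_Icc hf.integrableOn_Icc,
    setIntegral_Icc_eq_setIntegral_setIntegral_insertNth (f := fun x => g x - f x)
      (hg.sub hf).integrableOn_Icc k]
  refine setIntegral_nonneg measurableSet_Icc fun y hy => ?_
  have hins : Continuous fun t : ℝ => (k.insertNth t y : Fin (n + 1) → ℝ) := by fun_prop
  rw [integral_sub (f := fun t => g (k.insertNth t y)) (g := fun t => f (k.insertNth t y))
    (hg.comp hins).integrableOn_Icc (hf.comp hins).integrableOn_Icc, sub_nonneg]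
  exact hfg y hy

theorem hasDerivAt_insertNth {n : ℕ} (k : Fin (n + 1)) (y : Fin n → ℝ) (t : ℝ) :
    HasDerivAt (fun s : ℝ => (k.insertNth s y : Fin (n + 1) → ℝ)) (Pi.single k 1) t := by
  convert hasDerivAt_update (k.insertNth 0 y) k t using 1
  exact funext fun s => by rw [Fin.update_insertNth]

theorem sq_pi_div_mul_setIntegral_sq_le_setIntegral_fderiv_sq {n : ℕ} {L : Fin n → ℝ} {k : Fin n}
    (hL : 0 < L k) {u : (Fin n → ℝ) → ℝ} (hu : ContDiff ℝ 1 u)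
    (hbd : ∀ x ∈ Icc (-L) L, |x k| = L k → u x = 0) :
    (π / (2 * L k)) ^ 2 * ∫ x in Icc (-L) L, u x ^ 2 ≤
      ∫ x in Icc (-L) L, fderiv ℝ u x (Pi.single k 1) ^ 2 := by
  obtain ⟨m, rfl⟩ := Nat.exists_eq_add_one_of_ne_zero k.pos.ne'
  have hdu : Continuous fun x => fderiv ℝ u x (Pi.single k 1) :=
    (hu.continuous_fderiv one_ne_zero).clm_apply continuous_const
  rw [← integral_const_mul]
  refine setIntegral_Icc_mono_of_insertNth (continuous_const.mul (hu.continuous.pow 2))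
    (hdu.pow 2) k fun y hy => ?_
  have hzero : ∀ t ∈ Icc (-L k) (L k), |t| = L k → u (k.insertNth t y) = 0 := fun t ht hLt =>
    hbd _ (Fin.insertNth_mem_Icc.2 ⟨ht, hy⟩) (by rwa [Fin.insertNth_apply_same])
  rw [integral_const_mul]
  exact sq_pi_div_mul_setIntegral_sq_le_setIntegral_deriv_sq hL
    (fun t _ => (hu.differentiable one_ne_zero _).hasFDerivAt.comp_hasDerivAt t
      (hasDerivAt_insertNth k y t))
    (hdu.comp (by fun_prop)).continuousOn
    (hzero _ ⟨le_rfl, by linarith⟩ (by simp [hL.le]))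
    (hzero _ ⟨by linarith, le_rfl⟩ (abs_of_pos hL))

theorem weighted_dirichlet_estimate_box_general
    (l : ℕ) (L D : Fin l → ℝ)
    (hL : ∀ k, 0 < L k) (hD : ∀ k, 0 < D k)
    (u : (Fin l → ℝ) → ℝ) (hu : ContDiff ℝ 1 u)
    (hbd : ∀ x ∈ Set.univ.pi fun k => Set.Icc (-(L k)) (L k),
      (∃ k, |x k| = L k) → u x = 0) :
    ∑ k : Fin l, D k *
        ∫ x in Set.univ.pi fun k => Set.Icc (-(L k)) (L k),
          (fderiv ℝ u x (Pi.single k 1)) ^ 2 ≥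
      (Real.pi ^ 2 / 4) * (∑ k : Fin l, D k / (L k) ^ 2) *
        ∫ x in Set.univ.pi fun k => Set.Icc (-(L k)) (L k), (u x) ^ 2 := by
  have hbox : (Set.univ.pi fun k => Set.Icc (-(L k)) (L k)) = Icc (-L) L := pi_univ_Icc (-L) L
  rw [hbox] at hbd ⊢
  rw [ge_iff_le, Finset.mul_sum, Finset.sum_mul]
  refine Finset.sum_le_sum fun k _ => ?_
  calc π ^ 2 / 4 * (D k / L k ^ 2) * ∫ x in Icc (-L) L, u x ^ 2
      = D k * ((π / (2 * L k)) ^ 2 * ∫ x in Icc (-L) L, u x ^ 2) := by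
        field_simp [(hL k).ne']
        ring
    _ ≤ D k * ∫ x in Icc (-L) L, fderiv ℝ u x (Pi.single k 1) ^ 2 :=
        mul_le_mul_of_nonneg_left
          (sq_pi_div_mul_setIntegral_sq_le_setIntegral_fderiv_sq (hL k) hu
            fun x hx hk => hbd x hx ⟨k, hk⟩) (hD k).le

/-- Weighted Dirichlet estimate on a box `Ω = Π_k [-L k, L k]`. -/
theorem weighted_dirichlet_estimate_box
    (l : ℕ) (hl : 0 < l) (L D : Fin l → ℝ)
    (hL : ∀ k, 0 < L k) (hD : ∀ k, 0 < D k)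
    (u : (Fin l → ℝ) → ℝ) (hu : ContDiff ℝ 1 u)
    (hbd : ∀ x ∈ Set.univ.pi fun k => Set.Icc (-(L k)) (L k),
      (∃ k, |x k| = L k) → u x = 0) :
    ∑ k : Fin l, D k *
        ∫ x in Set.univ.pi fun k => Set.Icc (-(L k)) (L k),
          (fderiv ℝ u x (Pi.single k 1)) ^ 2 ≥
      (Real.pi ^ 2 / 4) * (∑ k : Fin l, D k / (L k) ^ 2) *
        ∫ x in Set.univ.pi fun k => Set.Icc (-(L k)) (L k), (u x) ^ 2 :=
  weighted_dirichlet_estimate_box_general l L D hL hD u hu hbd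
end

section
/- Sector bound for the Hill regulation function with Hill coefficient 2: Let g(x) = x²/(1 + x²). Then for all real numbers a, b with 0 ≤ b ≤ a, one has 0 ≤ g(a) − g(b) ≤ 0.65 · (a − b). -/
lemma hill_aux (a b : ℝ) (ha : 0 ≤ a) (hb : 0 ≤ b) :
    a + b ≤ 0.65 * ((1 + a ^ 2) * (1 + b ^ 2)) := by
  nlinarith [sq_nonneg (a - b), sq_nonneg (a*b - 1), sq_nonneg (3*a*b - 1),
    sq_nonneg (3*(a+b)^2 - 4), sq_nonneg (a + b), mul_nonneg ha hb,
    sq_nonneg ((a+b)*(3*a*b-1)), sq_nonneg (a+b-2)]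

/-- Sector bound for the Hill regulation function with Hill coefficient 2. -/
theorem hill_function_sector_bound
    (g : ℝ → ℝ) (hg : ∀ x, g x = x ^ 2 / (1 + x ^ 2))
    (a b : ℝ) (hb : 0 ≤ b) (hba : b ≤ a) :
    0 ≤ g a - g b ∧ g a - g b ≤ 0.65 * (a - b) := by
  have ha2 : (0:ℝ) < 1 + a ^ 2 := by positivity
  have hb2 : (0:ℝ) < 1 + b ^ 2 := by positivity
  rw [hg, hg]
  have key : a ^ 2 / (1 + a ^ 2) - b ^ 2 / (1 + b ^ 2)
      = (a - b) * (a + b) / ((1 + a ^ 2) * (1 + b ^ 2)) := by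
    field_simp; ring
  rw [key]
  have hab : 0 ≤ a - b := sub_nonneg.2 hba
  constructor
  · apply div_nonneg _ (by positivity)
    nlinarith
  · rw [div_le_iff₀ (by positivity)]
    have := mul_le_mul_of_nonneg_left (hill_aux a b (hb.trans hba) hb) hab
    nlinarith [this]
end
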